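/- arXiv:1504.01709 — 7 statements merged into one kernel-verified Lean document; each statement's English description precedes it below -/
import Mathlib

section
/- For every copyless expression e over a commutative semiring S with variable set X, there exists an equivalent expression e' of the form e' = ⊕_{i=1}^{k} ( c_i ⊙ ⨀_{x ∈ X_i} x ), where X_1, …, X_k are pairwise distinct subsets of X and c_1, …, c_k are elements of S (k ≥ 0). -/
/-! ### Expressions over a semiring with variables -/

/-- Syntax trees of expressions over a semiring `S` with variables in `X`,
built from constants, variables, and the two semiring operations. -/
inductive Expr (S X : Type) : Type where
  | const : S → Expr S X
  | var : X → Expr S X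
  | add : Expr S X → Expr S X → Expr S X
  | mul : Expr S X → Expr S X → Expr S X

namespace Expr

variable {S X Y : Type}

/-- Evaluation of an expression under a valuation `ν : X → S`. -/
def eval [Add S] [Mul S] (ν : X → S) : Expr S X → S
  | const c => c
  | var x => ν x
  | add e₁ e₂ => e₁.eval ν + e₂.eval ν
  | mul e₁ e₂ => e₁.eval ν * e₂.eval ν

/-- Number of occurrences of the variable `x` in an expression. -/
def varCount [DecidableEq X] (x : X) : Expr S X → ℕ
  | const _ => 0
  | var y => if y = x then 1 else 0
  | add e₁ e₂ => e₁.varCount x + e₂.varCount x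
  | mul e₁ e₂ => e₁.varCount x + e₂.varCount x

/-- The set `Var(e)` of variables occurring in an expression. -/
def vars [DecidableEq X] : Expr S X → Finset X
  | const _ => ∅
  | var x => {x}
  | add e₁ e₂ => e₁.vars ∪ e₂.vars
  | mul e₁ e₂ => e₁.vars ∪ e₂.vars

/-- An expression is copyless if every variable occurs at most once in it. -/
def Copyless [DecidableEq X] (e : Expr S X) : Prop :=
  ∀ x : X, e.varCount x ≤ 1

/-- Substituting an expression `σ x` for each variable `x`. -/
def subst (σ : X → Expr S Y) : Expr S X → Expr S Y
  | const c => const c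
  | var x => σ x
  | add e₁ e₂ => add (e₁.subst σ) (e₂.subst σ)
  | mul e₁ e₂ => mul (e₁.subst σ) (e₂.subst σ)

/-- An expression never mentions the constant `0`. -/
def ZeroFree [Zero S] : Expr S X → Prop
  | const c => c ≠ (0 : S)
  | var _ => True
  | add e₁ e₂ => e₁.ZeroFree ∧ e₂.ZeroFree
  | mul e₁ e₂ => e₁.ZeroFree ∧ e₂.ZeroFree

/-- Number of constants mentioned in an expression. -/
def constCount : Expr S X → ℕ
  | const _ => 1
  | var _ => 0
  | add e₁ e₂ => e₁.constCount + e₂.constCount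
  | mul e₁ e₂ => e₁.constCount + e₂.constCount

/-- The top node of the expression is a `⊕`-node. -/
def isAddNode : Expr S X → Bool
  | add _ _ => true
  | _ => false

/-- The top node of the expression is a `⊙`-node. -/
def isMulNode : Expr S X → Bool
  | mul _ _ => true
  | _ => false

/-- The alternation `Alt(e)` of an expression: the maximal number of shifts
between `⊕` and `⊙` along branches of the parse tree. -/
def alt : Expr S X → ℕ
  | const _ => 0
  | var _ => 0
  | add e₁ e₂ =>
      max (e₁.alt + (if e₁.isMulNode then 1 else 0))
          (e₂.alt + (if e₂.isMulNode then 1 else 0)) + 1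
  | mul e₁ e₂ =>
      max (e₁.alt + (if e₁.isAddNode then 1 else 0))
          (e₂.alt + (if e₂.isAddNode then 1 else 0)) + 1

end Expr

/-! ### Substitutions -/

namespace Subs

variable {S X : Type}

/-- A substitution is copyless if each `σ x` is a copyless expression and
distinct registers use disjoint sets of variables. -/
def Copyless [DecidableEq X] (σ : X → Expr S X) : Prop :=
  (∀ x : X, (σ x).Copyless) ∧
    ∀ x y : X, x ≠ y → Disjoint ((σ x).vars) ((σ y).vars)

/-- Composition `σ ∘ τ` of substitutions: `(σ ∘ τ)(x) = σ̂(τ(x))`. -/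
def comp (σ τ : X → Expr S X) : X → Expr S X :=
  fun x => (τ x).subst σ

/-- The identity substitution. -/
def idS : X → Expr S X := fun x => Expr.var x

/-- `σ^n`, the `n`-fold composition of `σ` with itself. -/
def iterate (σ : X → Expr S X) : ℕ → (X → Expr S X)
  | 0 => idS
  | n + 1 => comp σ (iterate σ n)

/-- A substitution is in normal form w.r.t. the order on `X` if every variable
mentioned in `σ x` is at least `x`. -/
def NormalForm [DecidableEq X] [LE X] (σ : X → Expr S X) : Prop :=
  ∀ x y : X, y ∈ (σ x).vars → x ≤ y

/-- The register `x` is `σ`-stable, i.e. `x ∈ Var(σ x)`. -/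
def Stable [DecidableEq X] (σ : X → Expr S X) (x : X) : Prop :=
  x ∈ (σ x).vars

/-- A substitution is collapsing if every non-`σ`-stable register is mapped
to a variable-free (ground) expression. -/
def Collapsing [DecidableEq X] (σ : X → Expr S X) : Prop :=
  ∀ y : X, ¬ Stable σ y → (σ y).vars = ∅

end Subs

/-! ### Cost register automata -/

/-- A cost register automaton over semiring `S`, alphabet `A` and registers `X`. -/
structure CRA (S A X : Type) where
  Q : Type
  [finQ : Fintype Q]
  δ : Q → A → Q × (X → Expr S X)
  q0 : Q
  ν0 : X → S
  μ : Q → Expr S X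

attribute [instance] CRA.finQ

namespace CRA

variable {S A X : Type}

/-- One step of the run of a CRA on a letter. -/
def step [Add S] [Mul S] (M : CRA S A X) (c : M.Q × (X → S)) (a : A) : M.Q × (X → S) :=
  ((M.δ c.1 a).1, fun x => ((M.δ c.1 a).2 x).eval c.2)

/-- The configuration reached by the (unique) run of a CRA on a word. -/
def run [Add S] [Mul S] (M : CRA S A X) (w : List A) : M.Q × (X → S) :=
  w.foldl M.step (M.q0, M.ν0)

/-- The output `⟦M⟧(w)` of the CRA on the word `w`. -/
def output [Add S] [Mul S] (M : CRA S A X) (w : List A) : S :=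
  (M.μ (M.run w).1).eval (M.run w).2

/-- A CRA is copyless if all its transition substitutions and all its output
expressions are copyless. -/
def CopylessCRA [DecidableEq X] (M : CRA S A X) : Prop :=
  (∀ (q : M.Q) (a : A), Subs.Copyless (M.δ q a).2) ∧
    ∀ q : M.Q, (M.μ q).Copyless

/-- The transitive closure `δ*` of the transition function, composing the
substitutions along the word. -/
def deltaStar (M : CRA S A X) (q : M.Q) : List A → M.Q × (X → Expr S X)
  | [] => (q, Subs.idS)
  | a :: w =>
      ((M.deltaStar (M.δ q a).1 w).1,
        Subs.comp (M.δ q a).2 ((M.deltaStar (M.δ q a).1 w).2))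

/-- A CRA is in normal form if all its transition substitutions are. -/
def NormalFormCRA [DecidableEq X] [LE X] (M : CRA S A X) : Prop :=
  ∀ (q : M.Q) (a : A), Subs.NormalForm (M.δ q a).2

/-- A register is stable in `M` if it is stable on every substitution occurring
in `δ*`. -/
def StableIn [DecidableEq X] (M : CRA S A X) (x : X) : Prop :=
  ∀ (q : M.Q) (w : List A), Subs.Stable (M.deltaStar q w).2 x

/-- Every state of `M` is reachable from every state. -/
def StronglyConnected (M : CRA S A X) : Prop :=
  ∀ q q' : M.Q, ∃ w : List A, (M.deltaStar q w).1 = q'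

/-- The ground expression `ν0 ∘ σ1 ∘ … ∘ σn ∘ μ(qn)` arising from the run on `w`. -/
def groundExpr (M : CRA S A X) (w : List A) : Expr S X :=
  ((M.μ (M.deltaStar M.q0 w).1).subst ((M.deltaStar M.q0 w).2)).subst
    (fun x => Expr.const (M.ν0 x))

/-- The CRA has bounded alternation: the alternation of all ground output
expressions is uniformly bounded. -/
def BoundedAlt (M : CRA S A X) : Prop :=
  ∃ N : ℕ, ∀ w : List A, (M.groundExpr w).alt ≤ N

end CRA

/-! ### STATEMENT 0
For every copyless expression `e` over a commutative semiring `S` with variable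
set `X`, there exists an equivalent expression of the form
`⊕_{i=1}^{k} (c_i ⊙ ⨀_{x ∈ X_i} x)` where `X_1, …, X_k` are pairwise distinct
subsets of `X` and `c_1, …, c_k ∈ S`. -/
section Aux

variable {S X : Type}

lemma mem_vars_iff_varCount [DecidableEq X] (e : Expr S X) (x : X) :
    x ∈ e.vars ↔ e.varCount x ≠ 0 := by
  induction e with
  | const c => simp [Expr.vars, Expr.varCount]
  | var y =>
      simp only [Expr.vars, Expr.varCount, Finset.mem_singleton]
      split <;> simp_all [eq_comm]
  | add e₁ e₂ ih₁ ih₂ =>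
      simp [Expr.vars, Expr.varCount, Finset.mem_union, ih₁, ih₂]; omega
  | mul e₁ e₂ ih₁ ih₂ =>
      simp [Expr.vars, Expr.varCount, Finset.mem_union, ih₁, ih₂]; omega

lemma union_inter_of_subset_disjoint [DecidableEq X] {V₁ V₂ T₁ T₂ : Finset X}
    (h1 : T₁ ⊆ V₁) (h2 : T₂ ⊆ V₂) (hd : Disjoint V₁ V₂) :
    (T₁ ∪ T₂) ∩ V₁ = T₁ := by
  ext a
  simp only [Finset.mem_inter, Finset.mem_union]
  constructor
  · rintro ⟨h | h, hv⟩
    · exact h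
    · exact absurd hv (Finset.disjoint_right.1 hd (h2 h))
  · exact fun h => ⟨Or.inl h, h1 h⟩

lemma sum_monomials_aux [CommSemiring S] [DecidableEq X] (e : Expr S X)
    (he : e.Copyless) :
    ∃ f : Finset X → S,
      ∀ ν : X → S, e.eval ν = ∑ T ∈ e.vars.powerset, f T * ∏ x ∈ T, ν x := by
  induction e with
  | const c =>
      exact ⟨fun _ => c, fun ν => by simp [Expr.eval, Expr.vars]⟩
  | var x =>
      refine ⟨fun T => if T = {x} then 1 else 0, fun ν => ?_⟩
      have hps : ({x} : Finset X).powerset = {∅, {x}} := by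
        ext T; simp [Finset.subset_singleton_iff]
      show ν x = ∑ T ∈ ({x} : Finset X).powerset, _
      rw [hps, Finset.sum_pair (Finset.singleton_ne_empty x).symm]
      simp [Ne.symm (Finset.singleton_ne_empty x)]
  | add e₁ e₂ ih₁ ih₂ =>
      have hc₁ : e₁.Copyless := fun x => by
        have := he x; simp [Expr.varCount] at this ⊢; omega
      have hc₂ : e₂.Copyless := fun x => by
        have := he x; simp [Expr.varCount] at this ⊢; omega
      obtain ⟨f₁, hf₁⟩ := ih₁ hc₁
      obtain ⟨f₂, hf₂⟩ := ih₂ hc₂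
      refine ⟨fun T => (if T ⊆ e₁.vars then f₁ T else 0)
        + (if T ⊆ e₂.vars then f₂ T else 0), fun ν => ?_⟩
      have key : ∀ (V : Finset X) (g : Finset X → S), V ⊆ e₁.vars ∪ e₂.vars →
          (∑ T ∈ (e₁.vars ∪ e₂.vars).powerset,
            (if T ⊆ V then g T else 0) * ∏ x ∈ T, ν x)
          = ∑ T ∈ V.powerset, g T * ∏ x ∈ T, ν x := by
        intro V g hV
        rw [← Finset.sum_subset (Finset.powerset_mono.2 hV)]
        · exact Finset.sum_congr rfl fun T hT => by
            rw [if_pos (Finset.mem_powerset.1 hT)]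
        · intro T _ hT
          rw [if_neg (fun h => hT (Finset.mem_powerset.2 h)), zero_mul]
      simp only [Expr.eval, Expr.vars, hf₁ ν, hf₂ ν, add_mul, Finset.sum_add_distrib]
      rw [key _ f₁ Finset.subset_union_left, key _ f₂ Finset.subset_union_right]
  | mul e₁ e₂ ih₁ ih₂ =>
      have hc₁ : e₁.Copyless := fun x => by
        have := he x; simp [Expr.varCount] at this ⊢; omega
      have hc₂ : e₂.Copyless := fun x => by
        have := he x; simp [Expr.varCount] at this ⊢; omega
      have hdisj : Disjoint e₁.vars e₂.vars := by
        rw [Finset.disjoint_left]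
        intro x h1 h2
        rw [mem_vars_iff_varCount] at h1 h2
        have := he x; simp [Expr.varCount] at this; omega
      obtain ⟨f₁, hf₁⟩ := ih₁ hc₁
      obtain ⟨f₂, hf₂⟩ := ih₂ hc₂
      refine ⟨fun T => f₁ (T ∩ e₁.vars) * f₂ (T ∩ e₂.vars), fun ν => ?_⟩
      simp only [Expr.eval, Expr.vars, hf₁ ν, hf₂ ν, Finset.sum_mul_sum]
      rw [← Finset.sum_product']
      refine Finset.sum_nbij' (fun p => p.1 ∪ p.2) (fun T => (T ∩ e₁.vars, T ∩ e₂.vars))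
        ?_ ?_ ?_ ?_ ?_
      · rintro ⟨T₁, T₂⟩ hp
        simp only [Finset.mem_product, Finset.mem_powerset] at hp
        exact Finset.mem_powerset.2 (Finset.union_subset_union hp.1 hp.2)
      · intro T hT
        simp only [Finset.mem_product, Finset.mem_powerset]
        exact ⟨Finset.inter_subset_right, Finset.inter_subset_right⟩
      · rintro ⟨T₁, T₂⟩ hp
        simp only [Finset.mem_product, Finset.mem_powerset] at hp
        have h1 : (T₁ ∪ T₂) ∩ e₁.vars = T₁ :=
          union_inter_of_subset_disjoint hp.1 hp.2 hdisj
        have h2 : (T₁ ∪ T₂) ∩ e₂.vars = T₂ := by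
          rw [Finset.union_comm]
          exact union_inter_of_subset_disjoint hp.2 hp.1 hdisj.symm
        simp [h1, h2]
      · intro T hT
        have := Finset.mem_powerset.1 hT
        show T ∩ e₁.vars ∪ T ∩ e₂.vars = T
        rw [← Finset.inter_union_distrib_left, Finset.inter_eq_left.2 this]
      · rintro ⟨T₁, T₂⟩ hp
        simp only [Finset.mem_product, Finset.mem_powerset] at hp
        have hd : Disjoint T₁ T₂ :=
          Finset.disjoint_of_subset_left hp.1 (Finset.disjoint_of_subset_right hp.2 hdisj)
        have h1 : (T₁ ∪ T₂) ∩ e₁.vars = T₁ :=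
          union_inter_of_subset_disjoint hp.1 hp.2 hdisj
        have h2 : (T₁ ∪ T₂) ∩ e₂.vars = T₂ := by
          rw [Finset.union_comm]
          exact union_inter_of_subset_disjoint hp.2 hp.1 hdisj.symm
        rw [h1, h2, Finset.prod_union hd]
        ring

end Aux

theorem copyless_expr_sum_of_monomials {S X : Type} [CommSemiring S] [DecidableEq X]
    [Fintype X] (e : Expr S X) (he : e.Copyless) :
    ∃ (k : ℕ) (Xs : Fin k → Finset X) (cs : Fin k → S),
      Function.Injective Xs ∧
      ∀ ν : X → S, e.eval ν = ∑ i : Fin k, cs i * ∏ x ∈ Xs i, ν x := by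
  obtain ⟨f, hf⟩ := sum_monomials_aux e he
  set P : Finset (Finset X) := e.vars.powerset with hP
  refine ⟨P.card, fun i => (P.equivFin.symm i : Finset X),
    fun i => f (P.equivFin.symm i : Finset X), ?_, ?_⟩
  · intro i j hij
    exact P.equivFin.symm.injective (Subtype.coe_injective hij)
  · intro ν
    rw [hf ν, ← Finset.sum_attach P (fun T => f T * ∏ x ∈ T, ν x)]
    exact (Fintype.sum_equiv P.equivFin.symm _ _ (fun i => rfl)).symm
end

section
/- Let A be a copyless CRA over a commutative semiring S such that the function ⟦A⟧ computed by A is non-zero, i.e., ⟦A⟧(w) ≠ 0 for all words w. Then there exists a copyless CRA A' computing the same function such that the initial valuation of A', every expression appearing in the substitutions of the transitions of A', and every final output expression of A' at a reachable state never mention the constant 0. -/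
/-! ### Auxiliary development for removing zeros -/

namespace RemoveZeros

open Expr

variable {S X : Type}

theorem eval_subst [Add S] [Mul S] (τ : X → Expr S X) (ν : X → S) :
    ∀ e : Expr S X, (e.subst τ).eval ν = e.eval (fun x => (τ x).eval ν)
  | .const c => rfl
  | .var x => rfl
  | .add e₁ e₂ => by
      simp [Expr.subst, Expr.eval, eval_subst τ ν e₁, eval_subst τ ν e₂]
  | .mul e₁ e₂ => by
      simp [Expr.subst, Expr.eval, eval_subst τ ν e₁, eval_subst τ ν e₂]

open Classical in
/-- Zero-eliminating simplification. -/
noncomputable def simp0 [Zero S] : Expr S X → Expr S X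
  | .const c => .const c
  | .var x => .var x
  | .add e₁ e₂ =>
      if simp0 e₁ = .const 0 then simp0 e₂
      else if simp0 e₂ = .const 0 then simp0 e₁
      else .add (simp0 e₁) (simp0 e₂)
  | .mul e₁ e₂ =>
      if simp0 e₁ = .const 0 then .const 0
      else if simp0 e₂ = .const 0 then .const 0
      else .mul (simp0 e₁) (simp0 e₂)

theorem simp0_eval [CommSemiring S] (ν : X → S) :
    ∀ e : Expr S X, (simp0 e).eval ν = e.eval ν := by
  intro e
  induction e with
  | const c => rfl
  | var x => rfl
  | add e₁ e₂ ih₁ ih₂ =>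
      rw [simp0]
      split_ifs with h₁ h₂
      · rw [Expr.eval, ← ih₁, ← ih₂, h₁, Expr.eval, zero_add]
      · rw [Expr.eval, ← ih₁, ← ih₂, h₂, Expr.eval, add_zero]
      · rw [Expr.eval, Expr.eval, ih₁, ih₂]
  | mul e₁ e₂ ih₁ ih₂ =>
      rw [simp0]
      split_ifs with h₁ h₂
      · simp only [Expr.eval]
        rw [← ih₁, h₁]
        simp [Expr.eval]
      · simp only [Expr.eval]
        rw [← ih₂, h₂]
        simp [Expr.eval]
      · rw [Expr.eval, Expr.eval, ih₁, ih₂]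

theorem simp0_zf [Zero S] :
    ∀ e : Expr S X, simp0 e = .const 0 ∨ (simp0 e).ZeroFree := by
  intro e
  induction e with
  | const c =>
      by_cases h : c = (0 : S)
      · exact Or.inl (by rw [simp0, h])
      · exact Or.inr h
  | var x => exact Or.inr trivial
  | add e₁ e₂ ih₁ ih₂ =>
      rw [simp0]
      split_ifs with h₁ h₂
      · exact ih₂
      · exact ih₁
      · exact Or.inr ⟨ih₁.resolve_left h₁, ih₂.resolve_left h₂⟩
  | mul e₁ e₂ ih₁ ih₂ =>
      rw [simp0]
      split_ifs with h₁ h₂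
      · exact Or.inl rfl
      · exact Or.inl rfl
      · exact Or.inr ⟨ih₁.resolve_left h₁, ih₂.resolve_left h₂⟩

theorem simp0_varCount [Zero S] [DecidableEq X] (x : X) :
    ∀ e : Expr S X, (simp0 e).varCount x ≤ e.varCount x := by
  intro e
  induction e with
  | const c => exact le_refl _
  | var y => exact le_refl _
  | add e₁ e₂ ih₁ ih₂ =>
      rw [simp0]
      split_ifs with h₁ h₂
      · exact le_trans ih₂ (Nat.le_add_left _ _)
      · exact le_trans ih₁ (Nat.le_add_right _ _)
      · exact Nat.add_le_add ih₁ ih₂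
  | mul e₁ e₂ ih₁ ih₂ =>
      rw [simp0]
      split_ifs with h₁ h₂
      · exact Nat.zero_le _
      · exact Nat.zero_le _
      · exact Nat.add_le_add ih₁ ih₂

theorem varCount_vars [Zero S] [DecidableEq X] (x : X) :
    ∀ e : Expr S X, x ∈ e.vars → 1 ≤ e.varCount x := by
  intro e
  induction e with
  | const c => intro h; simp [Expr.vars] at h
  | var y =>
      intro h
      simp [Expr.vars] at h
      simp [Expr.varCount, h]
  | add e₁ e₂ ih₁ ih₂ =>
      intro h
      rw [Expr.vars, Finset.mem_union] at h
      rw [Expr.varCount]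
      rcases h with h | h
      · exact le_trans (ih₁ h) (Nat.le_add_right _ _)
      · exact le_trans (ih₂ h) (Nat.le_add_left _ _)
  | mul e₁ e₂ ih₁ ih₂ =>
      intro h
      rw [Expr.vars, Finset.mem_union] at h
      rw [Expr.varCount]
      rcases h with h | h
      · exact le_trans (ih₁ h) (Nat.le_add_right _ _)
      · exact le_trans (ih₂ h) (Nat.le_add_left _ _)

theorem simp0_vars [Zero S] [DecidableEq X] :
    ∀ e : Expr S X, (simp0 e).vars ⊆ e.vars := by
  intro e
  induction e with
  | const c => exact Finset.Subset.refl _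
  | var y => exact Finset.Subset.refl _
  | add e₁ e₂ ih₁ ih₂ =>
      rw [simp0]
      split_ifs with h₁ h₂
      · exact Finset.Subset.trans ih₂ Finset.subset_union_right
      · exact Finset.Subset.trans ih₁ Finset.subset_union_left
      · exact Finset.union_subset_union ih₁ ih₂
  | mul e₁ e₂ ih₁ ih₂ =>
      rw [simp0]
      split_ifs with h₁ h₂
      · intro x hx; simp [Expr.vars] at hx
      · intro x hx; simp [Expr.vars] at hx
      · exact Finset.union_subset_union ih₁ ih₂

/-- Substitution plugging in `0` for registers in `Z`. -/
noncomputable def zsub [Zero S] [DecidableEq X] (Z : Finset X) : X → Expr S X :=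
  fun z => if z ∈ Z then .const 0 else .var z

theorem zsub_vars [Zero S] [DecidableEq X] (Z : Finset X) :
    ∀ e : Expr S X, (e.subst (zsub Z)).vars ⊆ e.vars := by
  intro e
  induction e with
  | const c => exact Finset.Subset.refl _
  | var y =>
      rw [Expr.subst, zsub]
      split_ifs with h
      · intro x hx; simp [Expr.vars] at hx
      · exact Finset.Subset.refl _
  | add e₁ e₂ ih₁ ih₂ => exact Finset.union_subset_union ih₁ ih₂
  | mul e₁ e₂ ih₁ ih₂ => exact Finset.union_subset_union ih₁ ih₂

theorem zsub_varCount [Zero S] [DecidableEq X] (Z : Finset X) (x : X) :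
    ∀ e : Expr S X, (e.subst (zsub Z)).varCount x ≤ e.varCount x := by
  intro e
  induction e with
  | const c => exact le_refl _
  | var y =>
      rw [Expr.subst, zsub]
      split_ifs with h
      · exact Nat.zero_le _
      · exact le_refl _
  | add e₁ e₂ ih₁ ih₂ => exact Nat.add_le_add ih₁ ih₂
  | mul e₁ e₂ ih₁ ih₂ => exact Nat.add_le_add ih₁ ih₂

/-- The zero-processed version of an expression. -/
noncomputable def process [Zero S] [DecidableEq X] (Z : Finset X) (e : Expr S X) : Expr S X :=
  simp0 (e.subst (zsub Z))

theorem process_varCount [Zero S] [DecidableEq X] (Z : Finset X) (x : X) (e : Expr S X) :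
    (process Z e).varCount x ≤ e.varCount x :=
  le_trans (simp0_varCount x _) (zsub_varCount Z x e)

theorem process_vars [Zero S] [DecidableEq X] (Z : Finset X) (e : Expr S X) :
    (process Z e).vars ⊆ e.vars :=
  Finset.Subset.trans (simp0_vars _) (zsub_vars Z e)

theorem process_eval [CommSemiring S] [DecidableEq X] (Z : Finset X) (e : Expr S X)
    (ν ν' : X → S) (hZ : ∀ x ∈ Z, ν x = 0) (hN : ∀ x ∉ Z, ν' x = ν x) :
    (process Z e).eval ν' = e.eval ν := by
  rw [process, simp0_eval, eval_subst]
  congr 1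
  funext x
  rw [zsub]
  split_ifs with h
  · exact (hZ x h).symm
  · exact hN x h

open Classical in
/-- The zero-free CRA: states track the set of syntactically-zero registers. -/
noncomputable def remZeros {S A X : Type} [CommSemiring S] [DecidableEq X] [Fintype X]
    (M : CRA S A X) (c₀ : S) : CRA S A X where
  Q := M.Q × Finset X
  δ := fun p a =>
    (((M.δ p.1 a).1,
      Finset.univ.filter (fun x => process p.2 ((M.δ p.1 a).2 x) = Expr.const 0)),
     fun x =>
       if process p.2 ((M.δ p.1 a).2 x) = Expr.const 0 then Expr.const c₀
       else process p.2 ((M.δ p.1 a).2 x))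
  q0 := (M.q0, Finset.univ.filter (fun x => M.ν0 x = 0))
  ν0 := fun x => if M.ν0 x = 0 then c₀ else M.ν0 x
  μ := fun p => process p.2 (M.μ p.1)

/-- Configuration invariant. -/
def Inv {S A X : Type} [CommSemiring S] [DecidableEq X] [Fintype X]
    (M : CRA S A X) (c₀ : S) (c' : (remZeros M c₀).Q × (X → S))
    (c : M.Q × (X → S)) : Prop :=
  c'.1.1 = c.1 ∧ (∀ x ∈ c'.1.2, c.2 x = 0) ∧ ∀ x ∉ c'.1.2, c'.2 x = c.2 x

theorem remZeros_step {S A X : Type} [CommSemiring S] [DecidableEq X] [Fintype X]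
    (M : CRA S A X) (c₀ : S) (c' : (remZeros M c₀).Q × (X → S))
    (c : M.Q × (X → S)) (h : Inv M c₀ c' c) (a : A) :
    Inv M c₀ ((remZeros M c₀).step c' a) (M.step c a) := by
  classical
  obtain ⟨hq, hZ, hN⟩ := h
  have hev : ∀ e : Expr S X, (process c'.1.2 e).eval c'.2 = e.eval c.2 :=
    fun e => process_eval c'.1.2 e c.2 c'.2 hZ hN
  refine ⟨?_, ?_, ?_⟩
  · show ((remZeros M c₀).δ c'.1 a).1.1 = (M.δ c.1 a).1
    show (M.δ c'.1.1 a).1 = _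
    rw [hq]
  · intro x hx
    have hx' : process c'.1.2 ((M.δ c'.1.1 a).2 x) = Expr.const 0 := by
      have : x ∈ (((remZeros M c₀).δ c'.1 a).1).2 := hx
      simpa [remZeros] using this
    show ((M.δ c.1 a).2 x).eval c.2 = 0
    rw [← hq, ← hev _, hx']
    rfl
  · intro x hx
    have hx' : ¬ process c'.1.2 ((M.δ c'.1.1 a).2 x) = Expr.const 0 := by
      intro hcon
      apply hx
      show x ∈ (((remZeros M c₀).δ c'.1 a).1).2
      simp only [remZeros, Finset.mem_filter, Finset.mem_univ, true_and]
      exact hcon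
    show (((remZeros M c₀).δ c'.1 a).2 x).eval c'.2 = ((M.δ c.1 a).2 x).eval c.2
    have : ((remZeros M c₀).δ c'.1 a).2 x = process c'.1.2 ((M.δ c'.1.1 a).2 x) := by
      simp [remZeros, hx']
    rw [this, hev, hq]

theorem remZeros_run {S A X : Type} [CommSemiring S] [DecidableEq X] [Fintype X]
    (M : CRA S A X) (c₀ : S) (w : List A) :
    Inv M c₀ ((remZeros M c₀).run w) (M.run w) := by
  classical
  induction w using List.reverseRecOn with
  | nil =>
      refine ⟨rfl, ?_, ?_⟩
      · intro x hx
        simpa [CRA.run, remZeros] using hx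
      · intro x hx
        simp only [CRA.run, List.foldl_nil, remZeros] at hx ⊢
        rw [if_neg (by simpa using hx)]
  | append_singleton w a ih =>
      simp only [CRA.run, List.foldl_append, List.foldl_cons, List.foldl_nil] at ih ⊢
      exact remZeros_step M c₀ _ _ ih a

theorem remZeros_output {S A X : Type} [CommSemiring S] [DecidableEq X] [Fintype X]
    (M : CRA S A X) (c₀ : S) (w : List A) :
    (remZeros M c₀).output w = M.output w := by
  obtain ⟨hq, hZ, hN⟩ := remZeros_run M c₀ w
  rw [CRA.output, CRA.output]
  show (process ((remZeros M c₀).run w).1.2 (M.μ ((remZeros M c₀).run w).1.1)).eval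
      ((remZeros M c₀).run w).2 = _
  rw [hq]
  exact process_eval _ _ _ _ hZ hN

end RemoveZeros

/-! ### STATEMENT 1
If a copyless CRA computes a non-zero function then there is an equivalent
copyless CRA whose initial valuation, transition substitutions and output
expressions at reachable states never mention the constant `0`. -/
theorem copyless_CRA_remove_zeros {S A X : Type} [CommSemiring S] [DecidableEq X]
    [Fintype X] (M : CRA S A X) (hc : M.CopylessCRA)
    (hnz : ∀ w : List A, M.output w ≠ 0) :
    ∃ M' : CRA S A X, M'.CopylessCRA ∧
      (∀ w : List A, M'.output w = M.output w) ∧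
      (∀ x : X, M'.ν0 x ≠ 0) ∧
      (∀ (q : M'.Q) (a : A) (x : X), Expr.ZeroFree ((M'.δ q a).2 x)) ∧
      (∀ q : M'.Q, (∃ w : List A, (M'.run w).1 = q) → Expr.ZeroFree (M'.μ q)) := by
  classical
  open RemoveZeros in
  have hc₀ : M.output [] ≠ 0 := hnz []
  set c₀ := M.output [] with hc₀def
  refine ⟨remZeros M c₀, ⟨?_, ?_⟩, remZeros_output M c₀, ?_, ?_, ?_⟩
  · -- transition substitutions are copyless
    intro q a
    constructor
    · intro x y
      show Expr.varCount y (if process q.2 ((M.δ q.1 a).2 x) = Expr.const 0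
        then Expr.const c₀ else process q.2 ((M.δ q.1 a).2 x)) ≤ 1
      split_ifs with h
      · exact Nat.zero_le 1
      · exact le_trans (process_varCount q.2 y _) ((hc.1 q.1 a).1 x y)
    · intro x y hxy
      have hsub : ∀ z : X, (((remZeros M c₀).δ q a).2 z).vars ⊆
          ((M.δ q.1 a).2 z).vars := by
        intro z
        show (if process q.2 ((M.δ q.1 a).2 z) = Expr.const 0
          then Expr.const c₀ else process q.2 ((M.δ q.1 a).2 z)).vars ⊆ _
        split_ifs with h
        · intro u hu; simp [Expr.vars] at hu
        · exact process_vars q.2 _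
      exact Finset.disjoint_of_subset_left (hsub x)
        (Finset.disjoint_of_subset_right (hsub y) ((hc.1 q.1 a).2 x y hxy))
  · -- output expressions are copyless
    intro q x
    exact le_trans (process_varCount q.2 x _) (hc.2 q.1 x)
  · -- initial valuation is zero-free
    intro x
    show (if M.ν0 x = 0 then c₀ else M.ν0 x) ≠ 0
    split_ifs with h
    · exact hc₀
    · exact h
  · -- transition expressions are zero-free
    intro q a x
    show Expr.ZeroFree (if process q.2 ((M.δ q.1 a).2 x) = Expr.const 0
      then Expr.const c₀ else process q.2 ((M.δ q.1 a).2 x))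
    split_ifs with h
    · exact hc₀
    · exact (simp0_zf _).resolve_left h
  · -- output expressions at reachable states are zero-free
    rintro q ⟨w, hw⟩
    rcases simp0_zf (((M.μ q.1)).subst (zsub q.2)) with h | h
    · exfalso
      apply hnz w
      rw [← remZeros_output M c₀ w, CRA.output, hw]
      show (process q.2 (M.μ q.1)).eval _ = 0
      rw [process, h]
      rfl
    · exact h
end

section
/- For every copyless CRA A whose register set X carries a linear order ⪯, there exists a copyless CRA A' in normal form with respect to ⪯, with the same register set X, such that A and A' compute the same function; moreover the number of states of A' can be bounded by |Q| times the number of permutations of X (i.e., exponentially in the size of A). -/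
/-!
Run `M` while keeping its registers in a permuted order, the permutation being part of the
state. After each transition `σ` of `M` the registers are rearranged so that the `x`-th one is
updated only from registers placed at positions `≥ x`. Such an arrangement exists because a
copyless `σ` updates distinct registers from pairwise disjoint sets of variables: a register whose
update mentions a variable at a position `< x` can be charged to that variable, so at most
`#{y | y < x}` registers are unfit for position `x`, which is Hall's condition for the matching.
-/

open Finset Function

namespace Expr

variable {S X Y : Type}

theorem eval_subst [Add S] [Mul S] (σ : X → Expr S Y) (ν : Y → S) (e : Expr S X) :
    (e.subst σ).eval ν = e.eval (fun x => (σ x).eval ν) := by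
  induction e <;> simp [subst, eval, *]

def rename (f : X → Y) (e : Expr S X) : Expr S Y :=
  e.subst (fun x => var (f x))

theorem eval_rename [Add S] [Mul S] (f : X → Y) (ν : Y → S) (e : Expr S X) :
    (e.rename f).eval ν = e.eval (ν ∘ f) :=
  eval_subst _ ν e

theorem vars_rename [DecidableEq X] [DecidableEq Y] (f : X → Y) (e : Expr S X) :
    (e.rename f).vars = e.vars.image f := by
  induction e <;> simp_all [rename, subst, vars, image_union]

theorem varCount_rename [DecidableEq X] [DecidableEq Y] {f : X → Y}
    (hf : Injective f) (e : Expr S X) (x : X) :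
    (e.rename f).varCount (f x) = e.varCount x := by
  induction e <;> simp_all [rename, subst, varCount, hf.eq_iff]

theorem Copyless.rename [DecidableEq X] [DecidableEq Y] {e : Expr S X} (he : e.Copyless)
    (f : X ≃ Y) : (e.rename f).Copyless := fun y => by
  rw [← f.apply_symm_apply y, varCount_rename f.injective]
  exact he (f.symm y)

end Expr

theorem card_filter_exists_mem_lt_le {X : Type} [Fintype X] [LinearOrder X]
    {V : X → Finset X} (hV : Pairwise (Disjoint on V)) (x : X) :
    #{z | ∃ y ∈ V z, y < x} ≤ #{y | y < x} := by
  refine card_le_card_of_forall_subsingleton (fun z y => y ∈ V z) ?_ ?_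
  · intro z hz
    obtain ⟨y, hy, hyx⟩ := (mem_filter.1 hz).2
    exact ⟨y, by simpa using hyx, hy⟩
  · intro y _ z₁ hz₁ z₂ hz₂
    by_contra hne
    exact disjoint_left.1 (hV hne) hz₁.2 hz₂.2

theorem exists_perm_forall_le_of_pairwise_disjoint {X : Type} [Fintype X] [LinearOrder X]
    (V : X → Finset X) (hV : Pairwise (Disjoint on V)) :
    ∃ ρ : Equiv.Perm X, ∀ x, ∀ y ∈ V (ρ x), x ≤ y := by
  let admissible : X → Finset X := fun x => {z | ∀ y ∈ V z, x ≤ y}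
  have hall : ∀ s : Finset X, #s ≤ #(s.biUnion admissible) := by
    intro s
    rcases s.eq_empty_or_nonempty with rfl | hs
    · simp
    set x := s.min' hs
    have hs_le : #s ≤ #{y | x ≤ y} :=
      card_le_card fun y hy => by simpa using s.min'_le y hy
    have h_adm : #{y | x ≤ y} ≤ #{z | ∀ y ∈ V z, x ≤ y} := by
      have h₁ := card_filter_add_card_filter_not (s := univ) (fun y : X => x ≤ y)
      have h₂ := card_filter_add_card_filter_not (s := univ)
        (fun z => ∀ y ∈ V z, x ≤ y)
      have h₃ := card_filter_exists_mem_lt_le hV x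
      simp only [not_le, not_forall, exists_prop] at h₁ h₂
      omega
    have h_sub : admissible x ⊆ s.biUnion admissible :=
      subset_biUnion_of_mem admissible (s.min'_mem hs)
    exact hs_le.trans (h_adm.trans (card_le_card h_sub))
  obtain ⟨f, hf, hf_adm⟩ := (all_card_le_biUnion_card_iff_exists_injective admissible).1 hall
  refine ⟨Equiv.ofBijective f (Finite.injective_iff_bijective.1 hf), fun x y hy => ?_⟩
  exact (mem_filter.1 (hf_adm x)).2 y hy

namespace CRA

variable {S A X : Type} [DecidableEq X] [Fintype X] (M : CRA S A X)
  (next : M.Q → Equiv.Perm X → A → Equiv.Perm X)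

/-- States are pairs `(q, π)`; register `x` holds the value of register `π x` of `M`, and
`next q π a` is the new arrangement after reading `a` in that state. -/
def permute : CRA S A X where
  Q := M.Q × Equiv.Perm X
  δ := fun (s : M.Q × Equiv.Perm X) a => (((M.δ s.1 a).1, next s.1 s.2 a),
    fun x => ((M.δ s.1 a).2 (next s.1 s.2 a x)).rename s.2.symm)
  q0 := (M.q0, 1)
  ν0 := M.ν0
  μ := fun (s : M.Q × Equiv.Perm X) => (M.μ s.1).rename s.2.symm

theorem step_permute [Add S] [Mul S] (c : M.Q × (X → S)) (π : Equiv.Perm X) (a : A) :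
    (M.permute next).step ((c.1, π), c.2 ∘ π) a =
      (((M.step c a).1, next c.1 π a), (M.step c a).2 ∘ next c.1 π a) := by
  ext x
  · rfl
  · simp [step, permute, Expr.eval_rename, comp_def]

theorem foldl_step_permute [Add S] [Mul S] (w : List A) (c : M.Q × (X → S))
    (π : Equiv.Perm X) : ∃ π' : Equiv.Perm X,
      w.foldl (M.permute next).step ((c.1, π), c.2 ∘ π) =
        (((w.foldl M.step c).1, π'), (w.foldl M.step c).2 ∘ π') := by
  induction w generalizing c π with
  | nil => exact ⟨π, rfl⟩
  | cons a w ih =>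
    rw [List.foldl_cons, step_permute]
    exact ih (M.step c a) (next c.1 π a)

theorem output_permute [Add S] [Mul S] (w : List A) :
    (M.permute next).output w = M.output w := by
  obtain ⟨π, hπ⟩ := M.foldl_step_permute next w (M.q0, M.ν0) 1
  have hrun : (M.permute next).run w = (((M.run w).1, π), (M.run w).2 ∘ π) := hπ
  rw [output, output, hrun]
  simp [permute, Expr.eval_rename, comp_def]

theorem copylessCRA_permute (hM : M.CopylessCRA) :
    (M.permute next).CopylessCRA := by
  obtain ⟨hδ, hμ⟩ := hM
  refine ⟨fun s a => ⟨fun x => ((hδ s.1 a).1 _).rename _, fun x y hxy => ?_⟩,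
    fun s => (hμ s.1).rename _⟩
  simp only [permute, Expr.vars_rename]
  exact (disjoint_image s.2.symm.injective).2
    ((hδ s.1 a).2 _ _ ((next s.1 s.2 a).injective.ne hxy))

theorem normalFormCRA_permute [LE X]
    (h : ∀ q π a x, ∀ y ∈ ((M.δ q a).2 (next q π a x)).vars.image π.symm, x ≤ y) :
    (M.permute next).NormalFormCRA := by
  rintro ⟨q, π⟩ a x y hy
  simp only [permute, Expr.vars_rename] at hy
  exact h q π a x y hy

end CRA

theorem copyless_CRA_normal_form {S A X : Type} [CommSemiring S] [DecidableEq X]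
    [Fintype X] [LinearOrder X] (M : CRA S A X) (hc : M.CopylessCRA) :
    ∃ M' : CRA S A X, M'.CopylessCRA ∧ M'.NormalFormCRA ∧
      (∀ w : List A, M'.output w = M.output w) ∧
      Fintype.card M'.Q ≤ Fintype.card M.Q * Fintype.card (Equiv.Perm X) := by
  have hdisj (q : M.Q) (π : Equiv.Perm X) (a : A) :
      Pairwise (Disjoint on fun z => ((M.δ q a).2 z).vars.image π.symm) := fun x y hxy =>
    (disjoint_image π.symm.injective).2 ((hc.1 q a).2 x y hxy)
  choose next hnext using fun q π a =>
    exists_perm_forall_le_of_pairwise_disjoint _ (hdisj q π a)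
  exact ⟨M.permute next, M.copylessCRA_permute next hc, M.normalFormCRA_permute next hnext,
    M.output_permute next, (Fintype.card_prod _ _).le⟩
end

section
/- If σ and σ' are copyless substitutions over a commutative semiring that are both in normal form with respect to a linear order ⪯ on the variable set X, then their composition σ ∘ σ' is a copyless substitution in normal form with respect to ⪯. -/
/-!
Since `Var(σ̂ e)` is the union of the `Var(σ y)` for `y ∈ Var(e)`, a substitution whose images
have pairwise disjoint variable sets maps expressions with disjoint variables to expressions with
disjoint variables; by induction on `e` this makes `σ̂ e` copyless whenever `e` is. Normal form of
`σ ∘ σ'` is transitivity of `⪯` through the intermediate variable.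
-/

namespace Expr

variable {S X Y : Type} [DecidableEq X] [DecidableEq Y]

theorem mem_vars_iff_pos_varCount {e : Expr S X} {x : X} : x ∈ e.vars ↔ 0 < e.varCount x := by
  induction e with
  | const _ => simp [vars, varCount]
  | var y =>
    rcases eq_or_ne y x with rfl | h
    · simp [vars, varCount]
    · simp [vars, varCount, h, h.symm]
  | add e₁ e₂ ih₁ ih₂ | mul e₁ e₂ ih₁ ih₂ =>
    simp only [vars, varCount, Finset.mem_union, ih₁, ih₂]
    omega

theorem copyless_add_iff {e₁ e₂ : Expr S X} :
    (add e₁ e₂).Copyless ↔ e₁.Copyless ∧ e₂.Copyless ∧ Disjoint e₁.vars e₂.vars := by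
  simp only [Copyless, varCount, Finset.disjoint_left, mem_vars_iff_pos_varCount]
  constructor
  · intro h
    refine ⟨fun x => ?_, fun x => ?_, fun x h₁ h₂ => ?_⟩ <;> have := h x <;> omega
  · rintro ⟨h₁, h₂, hd⟩ x
    have := h₁ x
    have := h₂ x
    have := hd (a := x)
    omega

theorem copyless_mul_iff {e₁ e₂ : Expr S X} :
    (mul e₁ e₂).Copyless ↔ e₁.Copyless ∧ e₂.Copyless ∧ Disjoint e₁.vars e₂.vars :=
  copyless_add_iff

theorem vars_subst (σ : X → Expr S Y) (e : Expr S X) :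
    (e.subst σ).vars = e.vars.biUnion fun y => (σ y).vars := by
  induction e with
  | const _ => rfl
  | var x => simp [subst, vars]
  | add e₁ e₂ ih₁ ih₂ | mul e₁ e₂ ih₁ ih₂ =>
    simp only [subst, vars, ih₁, ih₂, Finset.union_biUnion]

theorem disjoint_vars_subst {σ : X → Expr S Y}
    (hσ : Pairwise fun x y => Disjoint (σ x).vars (σ y).vars)
    {e₁ e₂ : Expr S X} (h : Disjoint e₁.vars e₂.vars) :
    Disjoint (e₁.subst σ).vars (e₂.subst σ).vars := by
  rw [vars_subst, vars_subst, Finset.disjoint_biUnion_left]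
  intro x hx₁
  rw [Finset.disjoint_biUnion_right]
  intro y hy₂
  exact hσ (ne_of_mem_of_not_mem hy₂ (Finset.disjoint_left.1 h hx₁)).symm

theorem Copyless.subst {σ : X → Expr S Y} (hσ : ∀ x, (σ x).Copyless)
    (hσd : Pairwise fun x y => Disjoint (σ x).vars (σ y).vars) {e : Expr S X} (he : e.Copyless) :
    (e.subst σ).Copyless := by
  induction e with
  | const _ => exact fun _ => Nat.zero_le _
  | var x => exact hσ x
  | add e₁ e₂ ih₁ ih₂ =>
    obtain ⟨h₁, h₂, hd⟩ := copyless_add_iff.1 he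
    exact copyless_add_iff.2 ⟨ih₁ h₁, ih₂ h₂, disjoint_vars_subst hσd hd⟩
  | mul e₁ e₂ ih₁ ih₂ =>
    obtain ⟨h₁, h₂, hd⟩ := copyless_mul_iff.1 he
    exact copyless_mul_iff.2 ⟨ih₁ h₁, ih₂ h₂, disjoint_vars_subst hσd hd⟩

end Expr

namespace Subs

variable {S X : Type} [DecidableEq X]

theorem Copyless.comp {σ τ : X → Expr S X} (hσ : Copyless σ) (hτ : Copyless τ) :
    Copyless (comp σ τ) :=
  ⟨fun x => Expr.Copyless.subst hσ.1 hσ.2 (hτ.1 x),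
    fun _ _ hxy => Expr.disjoint_vars_subst hσ.2 (hτ.2 _ _ hxy)⟩

theorem NormalForm.comp [Preorder X] {σ τ : X → Expr S X} (hσ : NormalForm σ)
    (hτ : NormalForm τ) : NormalForm (comp σ τ) := by
  intro x z hz
  rw [Subs.comp, Expr.vars_subst, Finset.mem_biUnion] at hz
  obtain ⟨y, hy, hzy⟩ := hz
  exact (hτ x y hy).trans (hσ y z hzy)

end Subs

theorem comp_copyless_normalForm_general {S X : Type} [DecidableEq X]
    [LinearOrder X] (σ σ' : X → Expr S X)
    (h₁ : Subs.Copyless σ) (h₂ : Subs.Copyless σ')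
    (n₁ : Subs.NormalForm σ) (n₂ : Subs.NormalForm σ') :
    Subs.Copyless (Subs.comp σ σ') ∧ Subs.NormalForm (Subs.comp σ σ') :=
  ⟨h₁.comp h₂, n₁.comp n₂⟩

theorem comp_copyless_normalForm {S X : Type} [CommSemiring S] [DecidableEq X]
    [LinearOrder X] (σ σ' : X → Expr S X)
    (h₁ : Subs.Copyless σ) (h₂ : Subs.Copyless σ')
    (n₁ : Subs.NormalForm σ) (n₂ : Subs.NormalForm σ') :
    Subs.Copyless (Subs.comp σ σ') ∧ Subs.NormalForm (Subs.comp σ σ') :=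
  comp_copyless_normalForm_general σ σ' h₁ h₂ n₁ n₂
end

section
/- Let σ and σ' be two copyless substitutions in normal form with respect to a linear order ⪯ on the variable set X. For every register x ∈ X: x is stable on both σ and σ' if and only if x is stable on the composition σ ∘ σ'. -/
/-! ### STATEMENT 4
For copyless substitutions in normal form, a register is stable on both `σ`
and `σ'` iff it is stable on their composition `σ ∘ σ'`. -/

lemma vars_subst {S X : Type} [DecidableEq X] (σ : X → Expr S X) (e : Expr S X) (y : X) :
    y ∈ (e.subst σ).vars ↔ ∃ z ∈ e.vars, y ∈ (σ z).vars := by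
  induction e with
  | const c => simp [Expr.subst, Expr.vars]
  | var x => simp [Expr.subst, Expr.vars]
  | add e₁ e₂ ih₁ ih₂ =>
      simp only [Expr.subst, Expr.vars, Finset.mem_union, ih₁, ih₂]
      aesop
  | mul e₁ e₂ ih₁ ih₂ =>
      simp only [Expr.subst, Expr.vars, Finset.mem_union, ih₁, ih₂]
      aesop

theorem stable_comp_iff {S X : Type} [CommSemiring S] [DecidableEq X]
    [LinearOrder X] (σ σ' : X → Expr S X)
    (h₁ : Subs.Copyless σ) (h₂ : Subs.Copyless σ')
    (n₁ : Subs.NormalForm σ) (n₂ : Subs.NormalForm σ') (x : X) :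
    (Subs.Stable σ x ∧ Subs.Stable σ' x) ↔ Subs.Stable (Subs.comp σ σ') x := by
  constructor
  · rintro ⟨hs, hs'⟩
    exact (vars_subst σ (σ' x) x).2 ⟨x, hs', hs⟩
  · intro h
    obtain ⟨z, hz, hx⟩ := (vars_subst σ (σ' x) x).1 h
    have h1 : x ≤ z := n₂ x z hz
    have h2 : z ≤ x := n₁ z x hx
    have : z = x := le_antisymm h2 h1
    subst this
    exact ⟨hx, hz⟩
end

section
/- Let σ be a copyless substitution over a finite variable set X in normal form with respect to a linear order ⪯ on X. Then there exists N ≥ 0 (in fact N = |X| suffices) such that Var(σ^N(x)) = ∅ for every register x that is not σ-stable, where σ^N denotes the N-fold composition of σ with itself. -/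
/-! ### STATEMENT 7
For a copyless substitution `σ` in normal form over a finite register set `X`
there exists `N ≥ 0` (in fact `N = |X|` suffices) such that `σ^N` maps every
non-`σ`-stable register to a variable-free expression. -/
lemma vars_subst_s7 {S X : Type} [DecidableEq X] (τ : X → Expr S X) :
    ∀ e : Expr S X, (e.subst τ).vars = e.vars.biUnion (fun y => (τ y).vars) := by
  intro e
  induction e with
  | const c => simp [Expr.subst, Expr.vars]
  | var x => simp [Expr.subst, Expr.vars]
  | add e₁ e₂ ih₁ ih₂ =>
      simp only [Expr.subst, Expr.vars, ih₁, ih₂]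
      ext z
      simp only [Finset.mem_biUnion, Finset.mem_union]
      constructor
      · rintro (⟨w,hw,h⟩|⟨w,hw,h⟩)
        · exact ⟨w, Or.inl hw, h⟩
        · exact ⟨w, Or.inr hw, h⟩
      · rintro ⟨w, hw|hw, h⟩
        · exact Or.inl ⟨w, hw, h⟩
        · exact Or.inr ⟨w, hw, h⟩
  | mul e₁ e₂ ih₁ ih₂ =>
      simp only [Expr.subst, Expr.vars, ih₁, ih₂]
      ext z
      simp only [Finset.mem_biUnion, Finset.mem_union]
      constructor
      · rintro (⟨w,hw,h⟩|⟨w,hw,h⟩)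
        · exact ⟨w, Or.inl hw, h⟩
        · exact ⟨w, Or.inr hw, h⟩
      · rintro ⟨w, hw|hw, h⟩
        · exact Or.inl ⟨w, hw, h⟩
        · exact Or.inr ⟨w, hw, h⟩

lemma subst_subst {S X : Type} (τ σ : X → Expr S X) :
    ∀ e : Expr S X, (e.subst τ).subst σ = e.subst (fun y => (τ y).subst σ) := by
  intro e
  induction e with
  | const c => rfl
  | var x => rfl
  | add e₁ e₂ ih₁ ih₂ => simp [Expr.subst, ih₁, ih₂]
  | mul e₁ e₂ ih₁ ih₂ => simp [Expr.subst, ih₁, ih₂]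

lemma subst_idS {S X : Type} : ∀ e : Expr S X, e.subst Subs.idS = e := by
  intro e
  induction e with
  | const c => rfl
  | var x => rfl
  | add e₁ e₂ ih₁ ih₂ => simp [Expr.subst, ih₁, ih₂]
  | mul e₁ e₂ ih₁ ih₂ => simp [Expr.subst, ih₁, ih₂]

lemma iterate_succ' {S X : Type} (σ : X → Expr S X) (n : ℕ) (x : X) :
    Subs.iterate σ (n + 1) x = (σ x).subst (Subs.iterate σ n) := by
  induction n generalizing x with
  | zero =>
      show (Subs.idS x).subst σ = (σ x).subst Subs.idS
      simp [Subs.idS, Expr.subst, subst_idS]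
  | succ n ih =>
      show (Subs.iterate σ (n+1) x).subst σ = _
      rw [ih, subst_subst]
      rfl

theorem iterate_collapses {S X : Type} [CommSemiring S] [DecidableEq X]
    [Fintype X] [LinearOrder X] (σ : X → Expr S X)
    (hc : Subs.Copyless σ) (hn : Subs.NormalForm σ) :
    ∃ N : ℕ, N = Fintype.card X ∧
      ∀ x : X, ¬ Subs.Stable σ x → (Subs.iterate σ N x).vars = ∅ := by
  refine ⟨Fintype.card X, rfl, ?_⟩
  -- key: if y ∈ vars (σ x) and x is not stable, then y > x and y is not stable
  have key : ∀ x y : X, ¬ Subs.Stable σ x → y ∈ (σ x).vars →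
      x < y ∧ ¬ Subs.Stable σ y := by
    intro x y hx hy
    have hne : y ≠ x := by
      rintro rfl; exact hx hy
    constructor
    · exact lt_of_le_of_ne (hn x y hy) (Ne.symm hne)
    · intro hsy
      exact (Finset.disjoint_left.mp (hc.2 x y (Ne.symm hne)) hy) hsy
  -- main claim by induction on n
  have main : ∀ n : ℕ, ∀ x : X, ¬ Subs.Stable σ x →
      (Finset.univ.filter (fun z => x < z)).card < n →
      (Subs.iterate σ n x).vars = ∅ := by
    intro n
    induction n with
    | zero => intro x _ h; omega
    | succ n ih =>
        intro x hx hcard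
        rw [iterate_succ', vars_subst_s7]
        ext z
        simp only [Finset.mem_biUnion, Finset.notMem_empty, iff_false, not_exists]
        rintro y ⟨hy, hz⟩
        obtain ⟨hlt, hns⟩ := key x y hx hy
        have hsub : (Finset.univ.filter (fun z => y < z)) ⊂
            (Finset.univ.filter (fun z => x < z)) := by
          constructor
          · intro w hw
            simp only [Finset.mem_filter, Finset.mem_univ, true_and] at hw ⊢
            exact hlt.trans hw
          · intro hcon
            have := hcon (by simp [hlt] : y ∈ Finset.univ.filter (fun z => x < z))
            simp at this
        have hlt2 := Finset.card_lt_card hsub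
        have hemp : (Subs.iterate σ n y).vars = ∅ := ih y hns (by omega)
        rw [hemp] at hz
        simp at hz
  intro x hx
  apply main _ x hx
  have h1 : (Finset.univ.filter (fun z => x < z)) ⊂ Finset.univ := by
    constructor
    · exact Finset.filter_subset _ _
    · intro hcon
      have := hcon (Finset.mem_univ x)
      simp at this
  have := Finset.card_lt_card h1
  rw [Finset.card_univ] at this
  exact this
end

section
/- There exists a copyless CRA over the max-plus semiring (ℕ ∪ {−∞}, max, +, −∞, 0) and the alphabet Σ = {a, b, #}, with two registers, that computes the function f_B defined as follows: for a word w ∈ Σ* written as w = w_0 # w_1 # … # w_k with each w_i ∈ {a,b}*, letting n_i be the number of a's in w_i and m_i the number of b's in w_i, f_B(w) = max_{0 ≤ j ≤ k} ( m_j + Σ_{i=j+1}^{k} n_i ), and f_B(ε) = 0. -/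
/-! ### The max-plus semiring `(ℕ ∪ {−∞}, max, +, −∞, 0)` -/

/-- The carrier `ℕ ∪ {−∞}` of the max-plus semiring. -/
inductive MaxPlus : Type where
  | neginf : MaxPlus
  | nat : ℕ → MaxPlus
  deriving DecidableEq

namespace MaxPlus

/-- Semiring addition: `max`, with `−∞` neutral. -/
def addFn : MaxPlus → MaxPlus → MaxPlus
  | neginf, y => y
  | x, neginf => x
  | nat m, nat n => nat (max m n)

/-- Semiring multiplication: `+`, with `−∞` absorbing. -/
def mulFn : MaxPlus → MaxPlus → MaxPlus
  | neginf, _ => neginf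
  | _, neginf => neginf
  | nat m, nat n => nat (m + n)

instance : Add MaxPlus := ⟨addFn⟩
instance : Mul MaxPlus := ⟨mulFn⟩
instance : Zero MaxPlus := ⟨neginf⟩
instance : One MaxPlus := ⟨nat 0⟩

end MaxPlus

/-! ### The alphabet `Σ = {a, b, #}` -/

inductive ABH : Type where
  | a : ABH
  | b : ABH
  | hash : ABH
  deriving DecidableEq

instance : Fintype ABH :=
  ⟨{ABH.a, ABH.b, ABH.hash}, fun x => by cases x <;> simp⟩

/-- The function `f_B`: for `w = w_0 # w_1 # … # w_k` with `w_i ∈ {a,b}*`,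
`f_B(w) = max_{0 ≤ j ≤ k} ( m_j + Σ_{i=j+1}^{k} n_i )` where `n_i, m_i` are
the numbers of `a`'s resp. `b`'s in `w_i` (and `f_B(ε) = 0`). -/
def fB (w : List ABH) : MaxPlus :=
  let bs := w.splitOn ABH.hash
  MaxPlus.nat <|
    Finset.sup (Finset.range bs.length) fun j =>
      (bs.getD j []).count ABH.b + ((bs.drop (j + 1)).map fun u => u.count ABH.a).sum

/-!
A single state and two registers suffice. Register `0` holds the best value over the completed
blocks, already charged with every `a` read since; register `1` counts the `b`'s of the current
block. Reading `a` adds one to register `0`, reading `b` adds one to register `1`, and `#` moves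
`max` of the two into register `0` and resets register `1`; the output is that same `max`.
Block by block this is the Horner-type recursion `x ↦ max (x + nᵢ) mᵢ` started at `−∞`, whose
closed form is `max_j (m_j + Σ_{i>j} nᵢ) = f_B`.
-/

namespace MaxPlus

@[simp] lemma neginf_add (x : MaxPlus) : neginf + x = x := by cases x <;> rfl

@[simp] lemma add_neginf (x : MaxPlus) : x + neginf = x := by cases x <;> rfl

@[simp] lemma nat_add_nat (m n : ℕ) : nat m + nat n = nat (max m n) := rfl

@[simp] lemma neginf_mul (x : MaxPlus) : neginf * x = neginf := rfl

@[simp] lemma mul_neginf (x : MaxPlus) : x * neginf = neginf := by cases x <;> rfl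

@[simp] lemma nat_mul_nat (m n : ℕ) : nat m * nat n = nat (m + n) := rfl

@[simp] lemma mul_nat_zero (x : MaxPlus) : x * nat 0 = x := by cases x <;> rfl

protected lemma mul_assoc (x y z : MaxPlus) : x * y * z = x * (y * z) := by
  cases x <;> cases y <;> cases z <;> simp [Nat.add_assoc]

protected lemma add_mul (x y z : MaxPlus) : (x + y) * z = x * z + y * z := by
  cases x <;> cases y <;> cases z <;> simp [Nat.add_max_add_right]

end MaxPlus

namespace FB

open MaxPlus

def blockStep (x : MaxPlus) (u : List ABH) : MaxPlus :=
  x * nat (u.count .a) + nat (u.count .b)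

def blockMax (bs : List (List ABH)) : ℕ :=
  (Finset.range bs.length).sup fun j =>
    (bs.getD j []).count .b + ((bs.drop (j + 1)).map fun u => u.count .a).sum

lemma fB_eq_nat_blockMax (w : List ABH) : fB w = nat (blockMax (w.splitOn .hash)) := rfl

lemma blockMax_singleton (u : List ABH) : blockMax [u] = u.count .b := by
  simp [blockMax]

lemma blockMax_append_singleton {bs : List (List ABH)} (hbs : bs ≠ []) (u : List ABH) :
    blockMax (bs ++ [u]) = max (blockMax bs + u.count .a) (u.count .b) := by
  have hne : (Finset.range bs.length).Nonempty := by simpa using hbs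
  rw [blockMax, blockMax, List.length_append, List.length_singleton, Finset.range_add_one,
    Finset.sup_insert, Finset.sup_add hne, max_comm]
  congr 1
  · refine Finset.sup_congr rfl fun j hj => ?_
    rw [Finset.mem_range] at hj
    rw [List.getD_append _ _ _ _ hj, List.drop_append_of_le_length hj]
    simp [Nat.add_assoc]
  · simp

lemma nat_blockMax {bs : List (List ABH)} (hbs : bs ≠ []) :
    nat (blockMax bs) = bs.foldl blockStep neginf := by
  induction bs using List.reverseRecOn with
  | nil => exact absurd rfl hbs
  | append_singleton bs u ih =>
    rw [List.foldl_append, List.foldl_cons, List.foldl_nil]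
    rcases eq_or_ne bs [] with rfl | hbs'
    · simp [blockMax_singleton, blockStep]
    · rw [blockMax_append_singleton hbs', ← ih hbs']
      simp [blockStep]

def regUpdate : ABH → Fin 2 → Expr MaxPlus (Fin 2)
  | .a => ![.mul (.var 0) (.const (nat 1)), .var 1]
  | .b => ![.var 0, .mul (.var 1) (.const (nat 1))]
  | .hash => ![.add (.var 0) (.var 1), .const (nat 0)]

def M : CRA MaxPlus ABH (Fin 2) where
  Q := Unit
  δ := fun _ c => ((), regUpdate c)
  q0 := ()
  ν0 := ![neginf, nat 0]
  μ := fun _ => .add (.var 0) (.var 1)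

lemma copylessCRA_M : M.CopylessCRA := by
  unfold CRA.CopylessCRA Subs.Copyless Expr.Copyless
  decide

lemma step_a (q : M.Q) (x y : MaxPlus) : M.step (q, ![x, y]) .a = (q, ![x * nat 1, y]) :=
  Prod.ext rfl <| funext fun i => by fin_cases i <;> rfl

lemma step_b (q : M.Q) (x : MaxPlus) (y : ℕ) :
    M.step (q, ![x, nat y]) .b = (q, ![x, nat (y + 1)]) :=
  Prod.ext rfl <| funext fun i => by fin_cases i <;> rfl

lemma step_hash (q : M.Q) (x y : MaxPlus) : M.step (q, ![x, y]) .hash = (q, ![x + y, nat 0]) :=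
  Prod.ext rfl <| funext fun i => by fin_cases i <;> rfl

lemma eval_output (q : M.Q) (x y : MaxPlus) : (M.μ q).eval ![x, y] = x + y := rfl

lemma eval_foldl_step (q : M.Q) (w : List ABH) (x : MaxPlus) (y : ℕ) {u : List ABH}
    {us : List (List ABH)} (hw : w.splitOn .hash = u :: us) :
    (M.μ q).eval (w.foldl M.step (q, ![x, nat y])).2 =
      us.foldl blockStep (x * nat (u.count .a) + nat (y + u.count .b)) := by
  induction w generalizing x y u us with
  | nil =>
    obtain ⟨rfl, rfl⟩ := List.cons_eq_cons.mp hw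
    simp [eval_output]
  | cons c w ih =>
    obtain ⟨u', us', hw'⟩ := List.exists_cons_of_ne_nil (List.splitOn_ne_nil .hash w)
    cases c with
    | a =>
      rw [List.splitOn_cons_eq_if_modifyHead, hw', if_neg (by decide), List.modifyHead_cons, List.cons_eq_cons] at hw
      obtain ⟨rfl, rfl⟩ := hw
      rw [List.foldl_cons, step_a, ih _ _ hw']
      simp [MaxPlus.mul_assoc, Nat.add_comm]
    | b =>
      rw [List.splitOn_cons_eq_if_modifyHead, hw', if_neg (by decide), List.modifyHead_cons, List.cons_eq_cons] at hw
      obtain ⟨rfl, rfl⟩ := hw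
      rw [List.foldl_cons, step_b, ih _ _ hw']
      simp [Nat.add_comm, Nat.add_left_comm]
    | hash =>
      rw [List.splitOn_cons_eq_if_modifyHead, hw', if_pos (by decide), List.cons_eq_cons] at hw
      obtain ⟨rfl, rfl⟩ := hw
      rw [List.foldl_cons, step_hash, ih _ _ hw']
      simp [blockStep, MaxPlus.add_mul]

lemma output_M (w : List ABH) : M.output w = fB w := by
  obtain ⟨u, us, hw⟩ := List.exists_cons_of_ne_nil (List.splitOn_ne_nil .hash w)
  rw [fB_eq_nat_blockMax, nat_blockMax (List.splitOn_ne_nil .hash w), hw]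
  calc M.output w = (M.μ M.q0).eval (w.foldl M.step (M.q0, ![neginf, nat 0])).2 := rfl
    _ = us.foldl blockStep (neginf * nat (u.count .a) + nat (0 + u.count .b)) :=
      eval_foldl_step M.q0 w neginf 0 hw
    _ = (u :: us).foldl blockStep neginf := by simp [blockStep]

end FB

theorem exists_copyless_CRA_computing_fB :
    ∃ M : CRA MaxPlus ABH (Fin 2),
      M.CopylessCRA ∧ ∀ w : List ABH, M.output w = fB w :=
  ⟨FB.M, FB.copylessCRA_M, FB.output_M⟩
end
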